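/- arXiv:1412.3704 — 2 statements merged into one kernel-verified Lean document; each statement's English description precedes it below -/
import Mathlib

section
/- The set of elements of C_{s,∞} fixed by τ equals k_s = F_q(t_1,…,t_s). -/
/-!
A `τ`-fixed `x` has `‖x‖ ^ q = ‖x‖`, so `‖x‖ ≤ 1`, and by density `x` lies within distance `< 1`
of some `f / g` with `f`, `g` integral and `‖g‖ = 1`. Reducing modulo the maximal ideal of `C_∞`,
`τ x = x` gives `Frob(f̄) ḡ = f̄ Frob(ḡ)` in `k[t]`, `k` the residue field. Among the denominators
of `f̄ / ḡ`, one with fewest monomials is Frobenius-fixed up to a scalar, so `f̄ / ḡ = p̄ / r̄` with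
`p̄`, `r̄` Frobenius-fixed. Since `C_∞` is algebraically closed, the roots of `X ^ q - X` in `k`
lift to roots in `C_∞`, i.e. to `𝔽_q`; this gives `p, r ∈ 𝔽_q[t]` such that `x - p / r` is
`τ`-fixed of norm `< 1`, hence `0`.
-/

open MvPolynomial IsLocalRing

theorem eq_zero_or_eq_one_of_pow_eq_self {R : Type*} [Semifield R] [LinearOrder R]
    [IsStrictOrderedRing R] {a : R} {q : ℕ} (ha : 0 ≤ a) (hq : 1 < q) (h : a ^ q = a) :
    a = 0 ∨ a = 1 := by
  refine or_iff_not_imp_left.mpr fun h0 => ?_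
  refine (pow_eq_one_iff_of_nonneg (n := q - 1) ha (by omega)).mp (mul_right_cancel₀ h0 ?_)
  rw [← pow_succ, Nat.sub_add_cancel hq.le, h, one_mul]

section PowRingHom

variable {R S : Type*} [CommRing R] [CommRing S] {q : ℕ}

def powRingHom (q : ℕ) (hadd : ∀ a b : R, (a + b) ^ q = a ^ q + b ^ q) : R →+* R :=
  RingHom.mk' (powMonoidHom q) hadd

@[simp]
theorem powRingHom_apply (hadd : ∀ a b : R, (a + b) ^ q = a ^ q + b ^ q) (a : R) :
    powRingHom q hadd a = a ^ q :=
  rfl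

theorem pow_add_pow_of_injective (f : R →+* S) (hf : Function.Injective f)
    (hadd : ∀ a b : S, (a + b) ^ q = a ^ q + b ^ q) (a b : R) :
    (a + b) ^ q = a ^ q + b ^ q :=
  hf (by simp only [map_add, map_pow, hadd])

theorem pow_add_pow_of_surjective (f : R →+* S) (hf : Function.Surjective f)
    (hadd : ∀ a b : R, (a + b) ^ q = a ^ q + b ^ q) (a b : S) :
    (a + b) ^ q = a ^ q + b ^ q := by
  obtain ⟨a, rfl⟩ := hf a
  obtain ⟨b, rfl⟩ := hf b
  simp only [← map_add, ← map_pow, hadd]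

end PowRingHom

theorem Polynomial.exists_mem_roots_norm_sub_lt_one {K : Type*} [NormedField K]
    {T : Polynomial K} (hs : T.Splits) (hm : T.Monic) {b : K} (hb : ‖T.eval b‖ < 1) :
    ∃ a ∈ T.roots, ‖b - a‖ < 1 := by
  by_contra! h
  refine hb.not_ge ?_
  have hprod := map_multiset_prod (normHom : K →*₀ ℝ) (T.roots.map (b - ·))
  simp only [normHom_apply, Multiset.map_map] at hprod
  rw [hs.eval_eq_prod_roots_of_monic hm, hprod]
  exact Multiset.one_le_prod fun r hr => by
    obtain ⟨a, ha, rfl⟩ := Multiset.mem_map.mp hr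
    exact h a ha

namespace MvPolynomial

theorem map_eq_self_iff_forall_coeff {σ R : Type*} [CommSemiring R] {e : R →+* R}
    {P : MvPolynomial σ R} : map e P = P ↔ ∀ d, e (coeff d P) = coeff d P := by
  simp only [MvPolynomial.ext_iff, coeff_map]

section Descent

variable {σ K : Type*} [Field K]

theorem exists_ne_zero_map_eq_self_of_map_mem (e : K →+* K) {V : Submodule K (MvPolynomial σ K)}
    (hV : V ≠ ⊥) (he : ∀ B ∈ V, map e B ∈ V) : ∃ B ∈ V, B ≠ 0 ∧ map e B = B := by
  classical
  obtain ⟨B, ⟨hBV, hB0⟩, hmin⟩ := (measure fun B : MvPolynomial σ K => B.support.card).wf.has_min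
    {B | B ∈ V ∧ B ≠ 0} ((Submodule.ne_bot_iff V).mp hV)
  obtain ⟨d, hd⟩ := support_nonempty.mpr hB0
  have hc : coeff d B ≠ 0 := mem_support_iff.mp hd
  set B₁ := (coeff d B)⁻¹ • B
  have hB₁ : B₁.support = B.support := Finsupp.support_smul_eq (inv_ne_zero hc)
  have hB₁d : coeff d B₁ = 1 := by simp [B₁, inv_mul_cancel₀ hc]
  -- Normalising one coefficient to `1` makes `map e B₁ - B₁` vanish there: by minimality it is `0`.
  have hsupp : (map e B₁ - B₁).support ⊆ B.support.erase d := by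
    intro d' hd'
    rw [mem_support_iff, coeff_sub, coeff_map] at hd'
    refine Finset.mem_erase.mpr ⟨?_, ?_⟩
    · rintro rfl
      simp [hB₁d] at hd'
    · rw [← hB₁, mem_support_iff]
      rintro h
      simp [h] at hd'
  have hB₁V : B₁ ∈ V := V.smul_mem _ hBV
  refine ⟨B₁, hB₁V, by simpa [B₁, hc] using hB0, sub_eq_zero.mp ?_⟩
  by_contra hne
  exact hmin _ ⟨V.sub_mem (he _ hB₁V) hB₁V, hne⟩
    ((Finset.card_le_card hsupp).trans_lt (Finset.card_erase_lt_of_mem hd))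

theorem exists_map_eq_self_mul_eq_mul (e : K →+* K) {P Q : MvPolynomial σ K} (hQ : Q ≠ 0)
    (h : map e P * Q = P * map e Q) :
    ∃ P' Q' : MvPolynomial σ K, map e P' = P' ∧ map e Q' = Q' ∧ Q' ≠ 0 ∧ P * Q' = P' * Q := by
  have hmapQ : map e Q ≠ 0 := by
    rwa [Ne, ← map_zero (map e), (map_injective e e.injective).eq_iff]
  let V : Submodule K (MvPolynomial σ K) :=
    ((Ideal.span {Q}).restrictScalars K).comap (LinearMap.mulLeft K P)
  have hmemV : ∀ B, B ∈ V ↔ ∃ A, P * B = A * Q := fun B => by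
    simp only [V, Submodule.mem_comap, Submodule.restrictScalars_mem, Ideal.mem_span_singleton',
      LinearMap.mulLeft_apply, eq_comm]
  have hV : V ≠ ⊥ := (Submodule.ne_bot_iff V).mpr ⟨Q, (hmemV Q).mpr ⟨P, rfl⟩, hQ⟩
  have he : ∀ B ∈ V, map e B ∈ V := by
    intro B hB
    obtain ⟨A, hA⟩ := (hmemV B).mp hB
    refine (hmemV _).mpr ⟨map e A, mul_right_cancel₀ hmapQ ?_⟩
    calc P * map e B * map e Q = map e P * map e B * Q := by rw [mul_right_comm, ← h]; ring
      _ = map e A * Q * map e Q := by rw [← map_mul, hA, map_mul]; ring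
  obtain ⟨B, hBV, hB0, hBe⟩ := exists_ne_zero_map_eq_self_of_map_mem e hV he
  obtain ⟨A, hA⟩ := (hmemV B).mp hBV
  refine ⟨A, B, mul_right_cancel₀ (mul_ne_zero hQ hmapQ) ?_, hBe, hB0, hA⟩
  calc map e A * (Q * map e Q) = map e (P * B) * Q := by rw [hA, map_mul]; ring
    _ = A * (Q * map e Q) := by rw [map_mul, hBe, mul_right_comm, h, mul_right_comm, hA]; ring

end Descent

section CoeffNorm

variable {σ R : Type*} [CommSemiring R] [Norm R]

theorem finite_range_norm_coeff (f : MvPolynomial σ R) :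
    (Set.range fun d => ‖coeff d f‖).Finite := by
  refine ((f.support.finite_toSet.image fun d => ‖coeff d f‖).insert ‖(0 : R)‖).subset ?_
  rintro _ ⟨d, rfl⟩
  by_cases hd : d ∈ f.support
  · exact Set.mem_insert_of_mem _ ⟨d, hd, rfl⟩
  · simp [notMem_support_iff.mp hd]

theorem norm_coeff_le_iSup (f : MvPolynomial σ R) (d : σ →₀ ℕ) :
    ‖coeff d f‖ ≤ ⨆ d', ‖coeff d' f‖ :=
  le_ciSup (finite_range_norm_coeff f).bddAbove d

theorem exists_norm_coeff_eq_iSup (f : MvPolynomial σ R) :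
    ∃ d, ‖coeff d f‖ = ⨆ d', ‖coeff d' f‖ :=
  (Set.range_nonempty _).csSup_mem (finite_range_norm_coeff f)

end CoeffNorm

end MvPolynomial

noncomputable abbrev NormedField.integers (K : Type*) [NormedField K] [IsUltrametricDist K] :
    ValuationSubring K :=
  (NormedField.valuation (K := K)).valuationSubring

namespace NormedField

variable {K : Type*} [NormedField K] [IsUltrametricDist K]

theorem mem_integers_iff {x : K} : x ∈ integers K ↔ ‖x‖ ≤ 1 := by
  rw [Valuation.mem_valuationSubring_iff, valuation_apply, ← NNReal.coe_le_coe]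
  rfl

theorem norm_coe_integers_le_one (a : integers K) : ‖(a : K)‖ ≤ 1 :=
  mem_integers_iff.mp a.2

theorem residue_integers_eq_zero_iff {a : integers K} :
    residue (integers K) a = 0 ↔ ‖(a : K)‖ < 1 := by
  rw [residue_eq_zero_iff, Valuation.mem_maximalIdeal_iff, valuation_apply, ← NNReal.coe_lt_coe]
  rfl

theorem exists_residue_eq_of_pow_eq_self (halg : IsAlgClosed K) {q : ℕ} (hq : 1 < q)
    {y : ResidueField (integers K)} (hy : y ^ q = y) :
    ∃ c : integers K, c ^ q = c ∧ residue (integers K) c = y := by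
  obtain ⟨b, rfl⟩ := residue_surjective y
  have hmonic : (Polynomial.X ^ q - Polynomial.X : Polynomial K).Monic :=
    Polynomial.monic_X_pow_sub (by rw [Polynomial.degree_X]; exact_mod_cast hq)
  have hb : ‖(b : K) ^ q - b‖ < 1 := by
    simpa using residue_integers_eq_zero_iff.mp
      (show residue _ (b ^ q - b) = 0 by rw [map_sub, map_pow, hy, sub_self])
  obtain ⟨a, ha, hab⟩ := Polynomial.exists_mem_roots_norm_sub_lt_one (IsAlgClosed.splits _) hmonic
    (by simpa using hb)
  have ha1 : ‖a‖ ≤ 1 := by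
    calc ‖a‖ = ‖b + (a - b)‖ := by rw [add_sub_cancel]
      _ ≤ max ‖(b : K)‖ ‖a - b‖ := IsUltrametricDist.norm_add_le_max _ _
      _ ≤ 1 := max_le (norm_coe_integers_le_one b) (norm_sub_rev a b ▸ hab.le)
  refine ⟨⟨a, mem_integers_iff.mpr ha1⟩, Subtype.ext ?_, ?_⟩
  · simpa [sub_eq_zero] using Polynomial.isRoot_of_mem_roots ha
  · rw [← sub_eq_zero, ← map_sub, residue_integers_eq_zero_iff]
    simpa [norm_sub_rev] using hab

theorem integers_pow_add_pow {q : ℕ} (hadd : ∀ a b : K, (a + b) ^ q = a ^ q + b ^ q) :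
    ∀ a b : integers K, (a + b) ^ q = a ^ q + b ^ q :=
  pow_add_pow_of_injective (integers K).subtype Subtype.val_injective hadd

theorem residue_pow_add_pow {q : ℕ} (hadd : ∀ a b : K, (a + b) ^ q = a ^ q + b ^ q) :
    ∀ y z : ResidueField (integers K), (y + z) ^ q = y ^ q + z ^ q :=
  pow_add_pow_of_surjective _ residue_surjective (integers_pow_add_pow hadd)

theorem exists_map_residue_eq_of_map_eq_self (halg : IsAlgClosed K) {q : ℕ} (hq : 1 < q)
    {φ : integers K →+* integers K} (hφ : ∀ a, φ a = a ^ q)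
    {e : ResidueField (integers K) →+* ResidueField (integers K)} (he : ∀ y, e y = y ^ q)
    {σ : Type*} {Y : MvPolynomial σ (ResidueField (integers K))} (hY : map e Y = Y) :
    ∃ Z : MvPolynomial σ (integers K), map (residue _) Z = Y ∧
      ∀ d, coeff d (map (integers K).subtype Z) ^ q = coeff d (map (integers K).subtype Z) := by
  let T := φ.eqLocus (RingHom.id _)
  have hY : Y ∈ Set.range (map ((residue _).comp T.subtype)) := by
    refine mem_range_map_iff_coeffs_subset.mpr fun y hy => ?_
    obtain ⟨d, -, rfl⟩ := mem_coeffs_iff.mp hy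
    obtain ⟨c, hc, hcy⟩ := exists_residue_eq_of_pow_eq_self halg hq
      (by rw [← he, ← coeff_map, hY] : coeff d Y ^ q = coeff d Y)
    exact ⟨⟨c, by simp [T, RingHom.mem_eqLocus, hφ, hc]⟩, hcy⟩
  obtain ⟨Z, rfl⟩ := hY
  refine ⟨map T.subtype Z, by rw [map_map], fun d => ?_⟩
  rw [map_map, coeff_map]
  exact congrArg Subtype.val ((hφ _).symm.trans (coeff d Z).2)

theorem exists_map_residue_mul_sub_mul_eq_zero (halg : IsAlgClosed K) {q : ℕ} (hq : 1 < q)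
    {φ : integers K →+* integers K} (hφ : ∀ a, φ a = a ^ q)
    {e : ResidueField (integers K) →+* ResidueField (integers K)} (he : ∀ y, e y = y ^ q)
    {σ : Type*} {F G : MvPolynomial σ (integers K)} (hG : map (residue _) G ≠ 0)
    (hrel : map e (map (residue _) F) * map (residue _) G =
      map (residue _) F * map e (map (residue _) G)) :
    ∃ P R : MvPolynomial σ (integers K),
      (∀ d, coeff d (map (integers K).subtype P) ^ q = coeff d (map (integers K).subtype P)) ∧
      (∀ d, coeff d (map (integers K).subtype R) ^ q = coeff d (map (integers K).subtype R)) ∧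
      map (residue _) R ≠ 0 ∧
      map (residue _) (F * R - P * G) = 0 := by
  obtain ⟨P', R', hP', hR', hR'0, hPR⟩ := exists_map_eq_self_mul_eq_mul e hG hrel
  obtain ⟨P, rfl, hP⟩ := exists_map_residue_eq_of_map_eq_self halg hq hφ he hP'
  obtain ⟨R, rfl, hR⟩ := exists_map_residue_eq_of_map_eq_self halg hq hφ he hR'
  exact ⟨P, R, hP, hR, hR'0, by rw [map_sub, map_mul, map_mul, hPR, sub_self]⟩

end NormedField

theorem norm_div_sub_div_of_norm_eq_one {L : Type*} [NormedField L] {a b c d : L}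
    (hb : ‖b‖ = 1) (hd : ‖d‖ = 1) : ‖a / b - c / d‖ = ‖a * d - c * b‖ := by
  have hb0 : b ≠ 0 := norm_ne_zero_iff.mp (by rw [hb]; exact one_ne_zero)
  have hd0 : d ≠ 0 := norm_ne_zero_iff.mp (by rw [hd]; exact one_ne_zero)
  rw [div_sub_div _ _ hb0 hd0, norm_div, norm_mul, hb, hd, mul_one, div_one, mul_comm b c]

section GaussNorm

open NormedField

variable {σ K L : Type*} [NormedField K] [NormedField L] {ι : MvPolynomial σ K →+* L}

theorem norm_coeff_le_of_gauss (hgauss : ∀ f, ‖ι f‖ = ⨆ d, ‖coeff d f‖)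
    (f : MvPolynomial σ K) (d : σ →₀ ℕ) : ‖coeff d f‖ ≤ ‖ι f‖ :=
  hgauss f ▸ norm_coeff_le_iSup f d

theorem exists_norm_eq_norm_coeff_of_gauss (hgauss : ∀ f, ‖ι f‖ = ⨆ d, ‖coeff d f‖)
    (f : MvPolynomial σ K) : ∃ d, ‖ι f‖ = ‖coeff d f‖ := by
  obtain ⟨d, hd⟩ := exists_norm_coeff_eq_iSup f
  exact ⟨d, hgauss f ▸ hd.symm⟩

theorem norm_C_of_gauss (hgauss : ∀ f, ‖ι f‖ = ⨆ d, ‖coeff d f‖) (c : K) :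
    ‖ι (C c)‖ = ‖c‖ := by
  classical
  obtain ⟨d, hd⟩ := exists_norm_eq_norm_coeff_of_gauss hgauss (C c)
  refine le_antisymm ?_ (by simpa using norm_coeff_le_of_gauss hgauss (C c) 0)
  rw [hd, coeff_C]
  split_ifs <;> simp

theorem isUltrametricDist_of_gauss [IsUltrametricDist L]
    (hgauss : ∀ f, ‖ι f‖ = ⨆ d, ‖coeff d f‖) : IsUltrametricDist K :=
  IsUltrametricDist.isUltrametricDist_of_forall_norm_add_le_max_norm fun a b => by
    simpa only [← map_add, ← C_add, norm_C_of_gauss hgauss] using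
      IsUltrametricDist.norm_add_le_max (ι (C a)) (ι (C b))

variable [IsUltrametricDist K]

theorem norm_map_subtype_le_one_of_gauss (hgauss : ∀ f, ‖ι f‖ = ⨆ d, ‖coeff d f‖)
    (Z : MvPolynomial σ (integers K)) : ‖ι (map (integers K).subtype Z)‖ ≤ 1 := by
  obtain ⟨d, hd⟩ := exists_norm_eq_norm_coeff_of_gauss hgauss (map (integers K).subtype Z)
  rw [hd, coeff_map]
  exact norm_coe_integers_le_one _

theorem norm_map_subtype_lt_one_iff_of_gauss (hgauss : ∀ f, ‖ι f‖ = ⨆ d, ‖coeff d f‖)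
    (Z : MvPolynomial σ (integers K)) :
    ‖ι (map (integers K).subtype Z)‖ < 1 ↔ map (residue _) Z = 0 := by
  simp only [MvPolynomial.ext_iff, coeff_map, coeff_zero, residue_integers_eq_zero_iff]
  obtain ⟨d₀, hd₀⟩ := exists_norm_eq_norm_coeff_of_gauss hgauss (map (integers K).subtype Z)
  refine ⟨fun h d => ?_, fun h => ?_⟩
  · simpa [coeff_map] using (norm_coeff_le_of_gauss hgauss _ d).trans_lt h
  · rw [hd₀, coeff_map]
    exact h d₀

theorem norm_map_subtype_eq_one_iff_of_gauss (hgauss : ∀ f, ‖ι f‖ = ⨆ d, ‖coeff d f‖)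
    (Z : MvPolynomial σ (integers K)) :
    ‖ι (map (integers K).subtype Z)‖ = 1 ↔ map (residue _) Z ≠ 0 := by
  rw [Ne, ← norm_map_subtype_lt_one_iff_of_gauss hgauss, not_lt]
  exact ⟨ge_of_eq, (norm_map_subtype_le_one_of_gauss hgauss Z).antisymm⟩

theorem exists_map_subtype_eq_of_gauss (hgauss : ∀ f, ‖ι f‖ = ⨆ d, ‖coeff d f‖)
    {f : MvPolynomial σ K} (hf : ‖ι f‖ ≤ 1) : ∃ Z, map (integers K).subtype Z = f := by
  refine mem_range_map_iff_coeffs_subset.mpr fun c hc => ?_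
  obtain ⟨d, -, rfl⟩ := mem_coeffs_iff.mp hc
  exact ⟨⟨_, mem_integers_iff.mpr ((norm_coeff_le_of_gauss hgauss f d).trans hf)⟩, rfl⟩

theorem exists_norm_sub_div_lt_one_of_gauss [IsUltrametricDist L]
    (hgauss : ∀ f, ‖ι f‖ = ⨆ d, ‖coeff d f‖)
    (hdense : DenseRange fun fg : MvPolynomial σ K × MvPolynomial σ K => ι fg.1 / ι fg.2)
    {x : L} (hx : ‖x‖ ≤ 1) :
    ∃ F G : MvPolynomial σ (integers K), ‖ι (map (integers K).subtype G)‖ = 1 ∧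
      ‖x - ι (map (integers K).subtype F) / ι (map (integers K).subtype G)‖ < 1 := by
  obtain ⟨⟨f, g⟩, hfg⟩ := hdense.exists_dist_lt x one_pos
  rw [dist_eq_norm] at hfg
  by_cases hg : ι g = 0
  · exact ⟨0, 1, by simp, by simpa [hg] using hfg⟩
  -- rescale `f` and `g` so that the largest coefficient of `g` has norm `1`
  obtain ⟨d, hd⟩ := exists_norm_eq_norm_coeff_of_gauss hgauss g
  have hgd : ‖coeff d g‖ ≠ 0 := hd ▸ norm_ne_zero_iff.mpr hg
  set c := ι (C (coeff d g)⁻¹)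
  have hc : ‖c‖ = ‖coeff d g‖⁻¹ := by rw [norm_C_of_gauss hgauss, norm_inv]
  have hcg : ‖ι (C (coeff d g)⁻¹ * g)‖ = 1 := by rw [map_mul, norm_mul, hc, hd, inv_mul_cancel₀ hgd]
  have hcf : ‖ι (C (coeff d g)⁻¹ * f)‖ ≤ 1 := by
    have hle : ‖ι f / ι g‖ ≤ 1 := by
      calc ‖ι f / ι g‖ = ‖(ι f / ι g - x) + x‖ := by rw [sub_add_cancel]
        _ ≤ max ‖ι f / ι g - x‖ ‖x‖ := IsUltrametricDist.norm_add_le_max _ _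
        _ ≤ 1 := max_le (norm_sub_rev x _ ▸ hfg.le) hx
    rwa [map_mul, ← div_mul_cancel₀ (ι f) hg, ← mul_assoc, mul_comm c, mul_assoc, norm_mul,
      ← map_mul, hcg, mul_one]
  obtain ⟨F, hF⟩ := exists_map_subtype_eq_of_gauss hgauss hcf
  obtain ⟨G, hG⟩ := exists_map_subtype_eq_of_gauss hgauss hcg.le
  refine ⟨F, G, hG ▸ hcg, ?_⟩
  have hc0 : c ≠ 0 := norm_ne_zero_iff.mp (by rw [hc]; exact inv_ne_zero hgd)
  rwa [hF, hG, map_mul, map_mul, mul_div_mul_left _ _ hc0]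

theorem norm_div_sub_div_lt_one_of_gauss (hgauss : ∀ f, ‖ι f‖ = ⨆ d, ‖coeff d f‖)
    {F G P R : MvPolynomial σ (integers K)} (hG : ‖ι (map (integers K).subtype G)‖ = 1)
    (hR : ‖ι (map (integers K).subtype R)‖ = 1) (h : map (residue _) (F * R - P * G) = 0) :
    ‖ι (map (integers K).subtype F) / ι (map (integers K).subtype G) -
      ι (map (integers K).subtype P) / ι (map (integers K).subtype R)‖ < 1 := by
  rw [norm_div_sub_div_of_norm_eq_one hG hR]
  simpa only [map_sub, map_mul] using (norm_map_subtype_lt_one_iff_of_gauss hgauss _).mpr h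

end GaussNorm

section FixedPoints

open NormedField

variable {L : Type*} [NormedField L] {q : ℕ} {τ : L →+* L}

theorem eq_zero_or_norm_eq_one_of_apply_eq_self (hq : 1 < q) (hτ : ∀ x, ‖τ x‖ = ‖x‖ ^ q)
    {y : L} (hy : τ y = y) : y = 0 ∨ ‖y‖ = 1 := by
  simpa using eq_zero_or_eq_one_of_pow_eq_self (norm_nonneg y) hq (by rw [← hτ, hy])

theorem norm_le_one_of_apply_eq_self (hq : 1 < q) (hτ : ∀ x, ‖τ x‖ = ‖x‖ ^ q) {y : L}
    (hy : τ y = y) : ‖y‖ ≤ 1 :=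
  (eq_zero_or_norm_eq_one_of_apply_eq_self hq hτ hy).elim (fun h => by simp [h]) le_of_eq

theorem eq_of_apply_eq_self_of_norm_sub_lt_one (hq : 1 < q) (hτ : ∀ x, ‖τ x‖ = ‖x‖ ^ q)
    {x y : L} (hx : τ x = x) (hy : τ y = y) (hxy : ‖x - y‖ < 1) : x = y :=
  sub_eq_zero.mp ((eq_zero_or_norm_eq_one_of_apply_eq_self hq hτ
    (by rw [map_sub, hx, hy])).resolve_right hxy.ne)

variable {σ K : Type*} [NormedField K] {ι : MvPolynomial σ K →+* L}

theorem pow_add_pow_of_gauss (hgauss : ∀ f, ‖ι f‖ = ⨆ d, ‖coeff d f‖)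
    (hτC : ∀ c, τ (ι (C c)) = ι (C (c ^ q))) (a b : K) : (a + b) ^ q = a ^ q + b ^ q := by
  have hinj : Function.Injective (ι.comp C) := (injective_iff_map_eq_zero _).mpr fun c hc => by
    simpa [norm_C_of_gauss hgauss] using congrArg norm hc
  exact hinj (by simp only [RingHom.comp_apply, map_add, ← hτC])

theorem comp_eq_comp_map {φ : K →+* K} (hτX : ∀ i, τ (ι (X i)) = ι (X i))
    (hτC : ∀ c, τ (ι (C c)) = ι (C (φ c))) : τ.comp ι = ι.comp (map φ) :=
  ringHom_ext (fun c => by simp [hτC]) (fun i => by simp [hτX])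

theorem apply_eq_self_of_coeff_pow_eq_self {φ : K →+* K} (hτι : τ.comp ι = ι.comp (map φ))
    (hφ : ∀ a, φ a = a ^ q) {f : MvPolynomial σ K} (hf : ∀ d, coeff d f ^ q = coeff d f) :
    τ (ι f) = ι f := by
  rw [← RingHom.comp_apply, hτι, RingHom.comp_apply,
    map_eq_self_iff_forall_coeff.mpr fun d => (hφ _).trans (hf d)]

variable [IsUltrametricDist K] [IsUltrametricDist L]

theorem map_residue_mul_eq_of_norm_sub_div_lt_one (hgauss : ∀ f, ‖ι f‖ = ⨆ d, ‖coeff d f‖)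
    (hq : q ≠ 0) (hτ : ∀ x, ‖τ x‖ = ‖x‖ ^ q) {φ : K →+* K} (hτι : τ.comp ι = ι.comp (map φ))
    (hφ : ∀ a, φ a = a ^ q) {φO : integers K →+* integers K} (hφO : ∀ a, φO a = a ^ q)
    {e : ResidueField (integers K) →+* ResidueField (integers K)} (he : ∀ y, e y = y ^ q)
    {x : L} (hx : τ x = x) {F G : MvPolynomial σ (integers K)}
    (hG : ‖ι (map (integers K).subtype G)‖ = 1)
    (hxFG : ‖x - ι (map (integers K).subtype F) / ι (map (integers K).subtype G)‖ < 1) :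
    map e (map (residue _) F) * map (residue _) G =
      map (residue _) F * map e (map (residue _) G) := by
  set u := map (σ := σ) (integers K).subtype
  have hφu : φ.comp (integers K).subtype = (integers K).subtype.comp φO :=
    RingHom.ext fun a => by simp [hφ, hφO]
  have hτu : ∀ Z, τ (ι (u Z)) = ι (u (map φO Z)) := fun Z => by
    rw [← RingHom.comp_apply τ, hτι, RingHom.comp_apply, map_map, map_map, hφu]
  have hφe : (residue (integers K)).comp φO = e.comp (residue _) :=
    RingHom.ext fun a => by simp [hφO, he]
  have hred : ∀ Z : MvPolynomial σ (integers K),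
      map (residue _) (map φO Z) = map e (map (residue _) Z) := fun Z => by
    rw [map_map, map_map, hφe]
  set h := ι (u F) / ι (u G)
  -- `τ h` is close to `τ x = x`, hence to `h`
  have hτh : ‖τ h - h‖ < 1 := by
    have hτhx : ‖τ (h - x)‖ < 1 := by
      rw [hτ]
      exact pow_lt_one₀ (norm_nonneg _) (norm_sub_rev x h ▸ hxFG) hq
    calc ‖τ h - h‖ = ‖τ (h - x) + (x - h)‖ := by rw [map_sub, hx]; ring_nf
      _ ≤ max ‖τ (h - x)‖ ‖x - h‖ := IsUltrametricDist.norm_add_le_max _ _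
      _ < 1 := max_lt hτhx hxFG
  have hτG : ‖ι (u (map φO G))‖ = 1 := by rw [← hτu, hτ, hG, one_pow]
  rw [← sub_eq_zero, ← hred, ← hred, ← map_mul, ← map_mul, ← map_sub,
    ← norm_map_subtype_lt_one_iff_of_gauss hgauss]
  rw [map_div₀, hτu, hτu, norm_div_sub_div_of_norm_eq_one hτG hG] at hτh
  simpa only [map_sub, map_mul, mul_comm (ι (u G))] using hτh

theorem exists_eq_div_of_apply_eq_self (halg : IsAlgClosed K) (hq : 1 < q)
    (hgauss : ∀ f, ‖ι f‖ = ⨆ d, ‖coeff d f‖)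
    (hdense : DenseRange fun fg : MvPolynomial σ K × MvPolynomial σ K => ι fg.1 / ι fg.2)
    (hτ : ∀ x, ‖τ x‖ = ‖x‖ ^ q) {φ : K →+* K} (hτι : τ.comp ι = ι.comp (map φ))
    (hφ : ∀ a, φ a = a ^ q) {x : L} (hx : τ x = x) :
    ∃ f g : MvPolynomial σ K, (∀ d, coeff d f ^ q = coeff d f) ∧
      (∀ d, coeff d g ^ q = coeff d g) ∧ ι g ≠ 0 ∧ x = ι f / ι g := by
  have hadd : ∀ a b : K, (a + b) ^ q = a ^ q + b ^ q := fun a b => by simp only [← hφ, map_add]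
  let φO := powRingHom q (integers_pow_add_pow hadd)
  let e := powRingHom q (residue_pow_add_pow hadd)
  obtain ⟨F, G, hG, hxFG⟩ :=
    exists_norm_sub_div_lt_one_of_gauss hgauss hdense (norm_le_one_of_apply_eq_self hq hτ hx)
  have hrel := map_residue_mul_eq_of_norm_sub_div_lt_one hgauss (by omega) hτ hτι hφ
    (φO := φO) (fun _ => rfl) (e := e) (fun _ => rfl) hx hG hxFG
  obtain ⟨P, R, hP, hR, hR0, hPR⟩ := exists_map_residue_mul_sub_mul_eq_zero halg hq
    (φ := φO) (fun _ => rfl) (fun _ => rfl) ((norm_map_subtype_eq_one_iff_of_gauss hgauss G).mp hG)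
    hrel
  have hR1 := (norm_map_subtype_eq_one_iff_of_gauss hgauss R).mpr hR0
  refine ⟨_, _, hP, hR, norm_ne_zero_iff.mp (hR1 ▸ one_ne_zero), ?_⟩
  refine eq_of_apply_eq_self_of_norm_sub_lt_one hq hτ hx (by
    rw [map_div₀, apply_eq_self_of_coeff_pow_eq_self hτι hφ hP,
      apply_eq_self_of_coeff_pow_eq_self hτι hφ hR]) ?_
  calc _ = ‖(x - _) + (_ - _)‖ := by rw [sub_add_sub_cancel]
    _ ≤ max _ _ := IsUltrametricDist.norm_add_le_max _ _
    _ < 1 := max_lt hxFG (norm_div_sub_div_lt_one_of_gauss hgauss hG hR1 hPR)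

end FixedPoints

theorem stmt4_general {s q : ℕ} (hq : 1 < q)
    {Cinf Cs : Type*} [NormedField Cinf] [NormedField Cs]
    [IsUltrametricDist Cs]
    (halg : IsAlgClosed Cinf)
    (ι : MvPolynomial (Fin s) Cinf →+* Cs)
    (hGauss : ∀ f : MvPolynomial (Fin s) Cinf,
      ‖ι f‖ = ⨆ d : Fin s →₀ ℕ, ‖MvPolynomial.coeff d f‖)
    (hdense : DenseRange fun fg : MvPolynomial (Fin s) Cinf × MvPolynomial (Fin s) Cinf =>
      ι fg.1 / ι fg.2)
    (τ : Cs →+* Cs)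
    (hτnorm : ∀ x : Cs, ‖τ x‖ = ‖x‖ ^ q)
    (hτX : ∀ i : Fin s, τ (ι (MvPolynomial.X i)) = ι (MvPolynomial.X i))
    (hτC : ∀ c : Cinf, τ (ι (MvPolynomial.C c)) = ι (MvPolynomial.C (c ^ q))) :
    ∀ x : Cs, τ x = x ↔
      ∃ f g : MvPolynomial (Fin s) Cinf,
        (∀ d, MvPolynomial.coeff d f ^ q = MvPolynomial.coeff d f) ∧
        (∀ d, MvPolynomial.coeff d g ^ q = MvPolynomial.coeff d g) ∧
        ι g ≠ 0 ∧ x = ι f / ι g := by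
  have := isUltrametricDist_of_gauss hGauss
  have hadd := pow_add_pow_of_gauss hGauss hτC
  have hτι : τ.comp ι = ι.comp (map (powRingHom q hadd)) := comp_eq_comp_map hτX hτC
  intro x
  refine ⟨exists_eq_div_of_apply_eq_self halg hq hGauss hdense hτnorm hτι (powRingHom_apply hadd),
    ?_⟩
  rintro ⟨f, g, hf, hg, -, rfl⟩
  rw [map_div₀, apply_eq_self_of_coeff_pow_eq_self hτι (powRingHom_apply hadd) hf,
    apply_eq_self_of_coeff_pow_eq_self hτι (powRingHom_apply hadd) hg]

/-- The fixed points of `τ` on `C_{s,∞}` are exactly `k_s = 𝔽_q(t₁, …, t_s)`.  Here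
`C_∞` is the completion of an algebraic closure of `𝔽_q((1/θ))` (abstractly: a complete,
algebraically closed, non-archimedean normed field), `C_{s,∞}` is the completion of
`C_∞(t₁, …, t_s)` for the Gauss valuation (axiomatized by the embedding `ι` with the
Gauss-norm and density properties below), and `τ` is induced by the `q`-power map on
`C_∞`, fixing the `tᵢ`.  Inside `C_∞`, the subfield `𝔽_q` is `{c : c^q = c}`, so
`k_s` is the set of quotients `ι f / ι g` of polynomials all of whose coefficients
satisfy `c^q = c`.  Claim: `τ x = x` iff `x ∈ k_s`. -/
theorem stmt4 {s q : ℕ} (hq : 1 < q)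
    {Cinf Cs : Type*} [NormedField Cinf] [CompleteSpace Cinf] [NormedField Cs]
    [CompleteSpace Cs] [IsUltrametricDist Cs]
    (halg : IsAlgClosed Cinf)
    (ι : MvPolynomial (Fin s) Cinf →+* Cs)
    (hGauss : ∀ f : MvPolynomial (Fin s) Cinf,
      ‖ι f‖ = ⨆ d : Fin s →₀ ℕ, ‖MvPolynomial.coeff d f‖)
    (hdense : DenseRange fun fg : MvPolynomial (Fin s) Cinf × MvPolynomial (Fin s) Cinf =>
      ι fg.1 / ι fg.2)
    (τ : Cs →+* Cs) (hτcont : Continuous τ)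
    (hτnorm : ∀ x : Cs, ‖τ x‖ = ‖x‖ ^ q)
    (hτX : ∀ i : Fin s, τ (ι (MvPolynomial.X i)) = ι (MvPolynomial.X i))
    (hτC : ∀ c : Cinf, τ (ι (MvPolynomial.C c)) = ι (MvPolynomial.C (c ^ q))) :
    ∀ x : Cs, τ x = x ↔
      ∃ f g : MvPolynomial (Fin s) Cinf,
        (∀ d, MvPolynomial.coeff d f ^ q = MvPolynomial.coeff d f) ∧
        (∀ d, MvPolynomial.coeff d g ^ q = MvPolynomial.coeff d g) ∧
        ι g ≠ 0 ∧ x = ι f / ι g :=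
  stmt4_general hq halg ι hGauss hdense τ hτnorm hτX hτC
end

section
/- The element t_1 does not belong to U_s: there exist no β ∈ C_∞^× and γ ∈ \bar F_q(t_1,…,t_s) with v_∞(t_1 − β·τ(γ)/γ) > 0; equivalently, there is no x ∈ C_{s,∞}^× with τ(x) = t_1·x. -/
/-!
Fix a monomial order. For a nonzero polynomial `f` over a non-archimedean field, the Gauss
degree of `f` is the largest exponent among the coefficients of `f` of maximal norm, i.e. the
leading exponent of the reduction of `f / ‖f‖` modulo the maximal ideal. The Gauss lemma makes
it additive on products, the twist `φ = (·) ^ q` of the coefficients does not change it, and two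
polynomials that are closer to each other than their Gauss norm have the same Gauss degree.

If `‖t₁ - β τ(γ)/γ‖ < 1` with `γ = g / h`, clearing denominators gives
`‖t₁ g φ(h) - β φ(g) h‖ < ‖g‖ ‖h‖ ^ q = ‖t₁ g φ(h)‖`, so `t₁ g φ(h)` and `β φ(g) h` have the same
Gauss degree; but the two degrees differ by the exponent of `t₁`. A solution of `τ x = t₁ x`
would give such a `γ`, by approximating `x` with a quotient of polynomials.
-/

open MvPolynomial IsUltrametricDist Finset

universe u

theorem MonomialOrder.nonempty (σ : Type u) : Nonempty (MonomialOrder.{u, u} σ) := by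
  let _ : LinearOrder σ := IsWellOrder.linearOrder WellOrderingRel
  have : WellFoundedLT σ := ⟨WellOrderingRel.isWellOrder.wf⟩
  exact ⟨(MonomialOrder.lex : MonomialOrder σᵒᵈ)⟩

theorem ne_zero_of_norm_map_eq_pow {K L : Type*} [NormedField K] [NormedField L] {q : ℕ}
    {φ : K →+* L} (hφ : ∀ c, ‖φ c‖ = ‖c‖ ^ q) : q ≠ 0 := by
  rintro rfl
  simpa using hφ 0

theorem IsUltrametricDist.norm_eq_of_norm_sub_lt {S : Type*} [SeminormedAddGroup S]
    [IsUltrametricDist S] {x y : S} (h : ‖x - y‖ < ‖x‖) : ‖y‖ = ‖x‖ := by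
  have hlt : ‖x + -y‖ < max ‖x‖ ‖-y‖ := by
    rw [← sub_eq_add_neg]
    exact h.trans_le (le_max_left _ _)
  simpa using (norm_eq_of_add_norm_lt_max hlt).symm

theorem IsUltrametricDist.norm_sum_lt_of_forall_lt {M ι : Type*} [SeminormedAddCommGroup M]
    [IsUltrametricDist M] {s : Finset ι} {f : ι → M} {C : ℝ} (hC : 0 < C)
    (h : ∀ i ∈ s, ‖f i‖ < C) : ‖∑ i ∈ s, f i‖ < C := by
  rcases s.eq_empty_or_nonempty with rfl | hs
  · simpa using hC
  · exact (hs.norm_sum_le_sup'_norm f).trans_lt ((sup'_lt_iff hs).mpr h)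

namespace MvPolynomial

variable {σ K : Type*} [NormedField K]

noncomputable def supNorm (f : MvPolynomial σ K) : ℝ := ⨆ d, ‖coeff d f‖

theorem bddAbove_range_norm_coeff (f : MvPolynomial σ K) :
    BddAbove (Set.range fun d => ‖coeff d f‖) := by
  refine ⟨∑ e ∈ f.support, ‖coeff e f‖, ?_⟩
  rintro _ ⟨d, rfl⟩
  by_cases hd : d ∈ f.support
  · exact single_le_sum (fun e _ => norm_nonneg (coeff e f)) hd
  · simp only [notMem_support_iff.mp hd, norm_zero]
    positivity

theorem norm_coeff_le_supNorm (f : MvPolynomial σ K) (d : σ →₀ ℕ) :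
    ‖coeff d f‖ ≤ supNorm f :=
  le_ciSup (bddAbove_range_norm_coeff f) d

theorem supNorm_le {f : MvPolynomial σ K} {r : ℝ} (h : ∀ d, ‖coeff d f‖ ≤ r) :
    supNorm f ≤ r :=
  ciSup_le h

theorem supNorm_nonneg (f : MvPolynomial σ K) : 0 ≤ supNorm f :=
  (norm_nonneg _).trans (norm_coeff_le_supNorm f 0)

theorem supNorm_pos {f : MvPolynomial σ K} (hf : f ≠ 0) : 0 < supNorm f := by
  obtain ⟨d, hd⟩ := ne_zero_iff.mp hf
  exact (norm_pos_iff.mpr hd).trans_le (norm_coeff_le_supNorm f d)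

@[simp]
theorem supNorm_zero : supNorm (0 : MvPolynomial σ K) = 0 :=
  le_antisymm (supNorm_le fun d => by simp) (supNorm_nonneg 0)

theorem exists_norm_coeff_eq_supNorm (f : MvPolynomial σ K) :
    ∃ d, ‖coeff d f‖ = supNorm f := by
  rcases eq_or_ne f 0 with rfl | hf
  · exact ⟨0, by simp⟩
  obtain ⟨d, -, hmax⟩ :=
    f.support.exists_max_image (fun d => ‖coeff d f‖) (support_nonempty.mpr hf)
  refine ⟨d, le_antisymm (norm_coeff_le_supNorm f d) (supNorm_le fun e => ?_)⟩
  by_cases he : e ∈ f.support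
  · exact hmax e he
  · simp [notMem_support_iff.mp he]

theorem supNorm_monomial (d : σ →₀ ℕ) (c : K) : supNorm (monomial d c) = ‖c‖ := by
  classical
  refine le_antisymm (supNorm_le fun e => ?_) ?_
  · rw [coeff_monomial]
    split_ifs <;> simp
  · simpa [coeff_monomial] using norm_coeff_le_supNorm (monomial d c) d

theorem supNorm_map {L : Type*} [NormedField L] {q : ℕ} (φ : K →+* L)
    (hφ : ∀ c, ‖φ c‖ = ‖c‖ ^ q) (f : MvPolynomial σ K) :
    supNorm (map φ f) = supNorm f ^ q := by
  refine le_antisymm (supNorm_le fun d => ?_) ?_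
  · rw [coeff_map, hφ]
    exact pow_le_pow_left₀ (norm_nonneg _) (norm_coeff_le_supNorm f d) q
  · obtain ⟨d, hd⟩ := exists_norm_coeff_eq_supNorm f
    simpa [coeff_map, hφ, hd] using norm_coeff_le_supNorm (map φ f) d

theorem norm_coeff_mul_le [IsUltrametricDist K] (f g : MvPolynomial σ K) (d : σ →₀ ℕ) :
    ‖coeff d (f * g)‖ ≤ supNorm f * supNorm g := by
  classical
  rw [coeff_mul]
  refine norm_sum_le_of_forall_le_of_nonneg
    (mul_nonneg (supNorm_nonneg f) (supNorm_nonneg g)) fun x _ => ?_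
  rw [norm_mul]
  exact mul_le_mul (norm_coeff_le_supNorm f _) (norm_coeff_le_supNorm g _)
    (norm_nonneg _) (supNorm_nonneg f)

end MvPolynomial

namespace MonomialOrder

variable {σ K : Type*} [NormedField K] (m : MonomialOrder σ)

noncomputable def gaussDegree (f : MvPolynomial σ K) : σ →₀ ℕ :=
  m.toSyn.symm ({d ∈ f.support | ‖coeff d f‖ = supNorm f}.sup m.toSyn)

variable {m}

theorem le_gaussDegree {f : MvPolynomial σ K} {d : σ →₀ ℕ} (hf : f ≠ 0)
    (hd : ‖coeff d f‖ = supNorm f) : d ≼[m] m.gaussDegree f := by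
  have hd0 : coeff d f ≠ 0 := norm_pos_iff.mp (hd ▸ supNorm_pos hf)
  rw [gaussDegree, AddEquiv.apply_symm_apply]
  exact le_sup (f := m.toSyn) (mem_filter.mpr ⟨mem_support_iff.mpr hd0, hd⟩)

theorem norm_coeff_gaussDegree (f : MvPolynomial σ K) :
    ‖coeff (m.gaussDegree f) f‖ = supNorm f := by
  rcases eq_or_ne f 0 with rfl | hf
  · simp
  obtain ⟨d, hd⟩ := exists_norm_coeff_eq_supNorm f
  have hd0 : coeff d f ≠ 0 := norm_pos_iff.mp (hd ▸ supNorm_pos hf)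
  obtain ⟨e, he, hsup⟩ := exists_mem_eq_sup {d ∈ f.support | ‖coeff d f‖ = supNorm f}
    ⟨d, mem_filter.mpr ⟨mem_support_iff.mpr hd0, hd⟩⟩ m.toSyn
  rw [gaussDegree, hsup, AddEquiv.symm_apply_apply]
  exact (mem_filter.mp he).2

theorem gaussDegree_eq_of_norm_coeff_eq {f : MvPolynomial σ K} {d : σ →₀ ℕ} (hf : f ≠ 0)
    (hd : ‖coeff d f‖ = supNorm f) (hmax : ∀ e, ‖coeff e f‖ = supNorm f → e ≼[m] d) :
    m.gaussDegree f = d :=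
  m.toSyn.injective <| le_antisymm (hmax _ (norm_coeff_gaussDegree f)) (le_gaussDegree hf hd)

theorem gaussDegree_monomial (d : σ →₀ ℕ) {c : K} (hc : c ≠ 0) :
    m.gaussDegree (monomial d c) = d := by
  classical
  refine gaussDegree_eq_of_norm_coeff_eq (by simpa using hc) (by simp [supNorm_monomial])
    fun e he => ?_
  rw [coeff_monomial, supNorm_monomial] at he
  split_ifs at he with hde
  · rw [hde]
  · exact absurd he.symm (by simpa using hc)

theorem gaussDegree_map {L : Type*} [NormedField L] {q : ℕ} (φ : K →+* L)
    (hφ : ∀ c, ‖φ c‖ = ‖c‖ ^ q) (f : MvPolynomial σ K) :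
    m.gaussDegree (map φ f) = m.gaussDegree f := by
  have hq := ne_zero_of_norm_map_eq_pow hφ
  have hfilter : {d ∈ (map φ f).support | ‖coeff d (map φ f)‖ = supNorm (map φ f)}
      = {d ∈ f.support | ‖coeff d f‖ = supNorm f} := by
    ext d
    simp only [mem_filter, mem_support_iff, coeff_map, hφ, supNorm_map φ hφ,
      pow_left_inj₀ (norm_nonneg _) (supNorm_nonneg f) hq, ne_eq, map_eq_zero_iff φ φ.injective]
  rw [gaussDegree, gaussDegree, hfilter]

theorem norm_coeff_mul_coeff_lt {f g : MvPolynomial σ K} (hf : f ≠ 0) (hg : g ≠ 0)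
    {x y : σ →₀ ℕ} (hle : m.gaussDegree f + m.gaussDegree g ≼[m] x + y)
    (hne : (x, y) ≠ (m.gaussDegree f, m.gaussDegree g)) :
    ‖coeff x f * coeff y g‖ < supNorm f * supNorm g := by
  rw [norm_mul]
  by_contra! hge
  have hfx := norm_coeff_le_supNorm f x
  have hgy := norm_coeff_le_supNorm g y
  have hNf := supNorm_pos hf
  have hNg := supNorm_pos hg
  have hx : x ≼[m] m.gaussDegree f := le_gaussDegree hf
    (by nlinarith [mul_le_mul_of_nonneg_left hgy (norm_nonneg (coeff x f))])
  have hy : y ≼[m] m.gaussDegree g := le_gaussDegree hg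
    (by nlinarith [mul_le_mul_of_nonneg_right hfx (norm_nonneg (coeff y g))])
  have hsum :
      m.toSyn x + m.toSyn y = m.toSyn (m.gaussDegree f) + m.toSyn (m.gaussDegree g) := by
    simp only [← map_add] at hle ⊢
    exact le_antisymm (by simpa only [map_add] using add_le_add hx hy) hle
  obtain ⟨hxa, hyb⟩ := (add_eq_add_iff_eq_and_eq hx hy).mp hsum
  exact hne (Prod.ext (m.toSyn.injective hxa) (m.toSyn.injective hyb))

section Ultrametric

variable [IsUltrametricDist K] {f g : MvPolynomial σ K}

theorem norm_coeff_mul_gaussDegree_add_gaussDegree (hf : f ≠ 0) (hg : g ≠ 0) :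
    ‖coeff (m.gaussDegree f + m.gaussDegree g) (f * g)‖ = supNorm f * supNorm g := by
  classical
  set a := m.gaussDegree f
  set b := m.gaussDegree g
  have hab : (a, b) ∈ antidiagonal (a + b) := HasAntidiagonal.mem_antidiagonal.mpr rfl
  have hmain : ‖coeff a f * coeff b g‖ = supNorm f * supNorm g := by
    rw [norm_mul, norm_coeff_gaussDegree, norm_coeff_gaussDegree]
  have hrest : ‖∑ p ∈ (antidiagonal (a + b)).erase (a, b), coeff p.1 f * coeff p.2 g‖
      < supNorm f * supNorm g :=
    norm_sum_lt_of_forall_lt (mul_pos (supNorm_pos hf) (supNorm_pos hg)) fun p hp =>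
      norm_coeff_mul_coeff_lt hf hg
        (by rw [HasAntidiagonal.mem_antidiagonal.mp (mem_erase.mp hp).2]) (mem_erase.mp hp).1
  rw [coeff_mul, ← add_sum_erase _ _ hab, norm_add_eq_max_of_norm_ne_norm (hmain ▸ hrest.ne'),
    hmain, max_eq_left hrest.le]

theorem norm_coeff_mul_lt (hf : f ≠ 0) (hg : g ≠ 0) {d : σ →₀ ℕ}
    (hd : m.gaussDegree f + m.gaussDegree g ≺[m] d) :
    ‖coeff d (f * g)‖ < supNorm f * supNorm g := by
  classical
  rw [coeff_mul]
  refine norm_sum_lt_of_forall_lt (mul_pos (supNorm_pos hf) (supNorm_pos hg)) ?_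
  rintro ⟨x, y⟩ hxy
  obtain rfl : x + y = d := HasAntidiagonal.mem_antidiagonal.mp hxy
  refine norm_coeff_mul_coeff_lt hf hg hd.le fun hab => hd.ne ?_
  obtain ⟨rfl, rfl⟩ := Prod.mk.inj hab
  rfl

theorem _root_.MvPolynomial.supNorm_mul (f g : MvPolynomial σ K) :
    supNorm (f * g) = supNorm f * supNorm g := by
  rcases eq_or_ne f 0 with rfl | hf
  · simp
  rcases eq_or_ne g 0 with rfl | hg
  · simp
  obtain ⟨m⟩ := MonomialOrder.nonempty σ
  refine le_antisymm (supNorm_le (norm_coeff_mul_le f g)) ?_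
  rw [← norm_coeff_mul_gaussDegree_add_gaussDegree (m := m) hf hg]
  exact norm_coeff_le_supNorm _ _

theorem gaussDegree_mul (hf : f ≠ 0) (hg : g ≠ 0) :
    m.gaussDegree (f * g) = m.gaussDegree f + m.gaussDegree g := by
  refine gaussDegree_eq_of_norm_coeff_eq (mul_ne_zero hf hg)
    ((norm_coeff_mul_gaussDegree_add_gaussDegree hf hg).trans (supNorm_mul f g).symm)
    fun e he => ?_
  by_contra! hlt
  exact (norm_coeff_mul_lt hf hg hlt).ne (he.trans (supNorm_mul f g))

theorem gaussDegree_eq_of_supNorm_sub_lt (h : supNorm (f - g) < supNorm f) :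
    m.gaussDegree f = m.gaussDegree g := by
  have hN : 0 < supNorm f := (supNorm_nonneg _).trans_lt h
  have hsub (d : σ →₀ ℕ) : ‖coeff d f - coeff d g‖ < supNorm f := by
    simpa only [MvPolynomial.coeff_sub] using (norm_coeff_le_supNorm (f - g) d).trans_lt h
  have hiff (d : σ →₀ ℕ) : ‖coeff d f‖ = supNorm f ↔ ‖coeff d g‖ = supNorm f := by
    refine ⟨fun hd => ?_, fun hd => ?_⟩
    · rw [norm_eq_of_norm_sub_lt (hd ▸ hsub d), hd]
    · rw [norm_eq_of_norm_sub_lt (x := coeff d g) (by rw [norm_sub_rev, hd]; exact hsub d), hd]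
  have hNg : supNorm g = supNorm f := by
    refine le_antisymm (supNorm_le fun d => ?_) ?_
    · calc ‖coeff d g‖ = ‖coeff d f + (coeff d g - coeff d f)‖ := by rw [add_sub_cancel]
        _ ≤ max ‖coeff d f‖ ‖coeff d g - coeff d f‖ := norm_add_le_max _ _
        _ ≤ supNorm f :=
          max_le (norm_coeff_le_supNorm f d) (norm_sub_rev (coeff d f) _ ▸ hsub d).le
    · obtain ⟨d, hd⟩ := exists_norm_coeff_eq_supNorm f
      exact ((hiff d).mp hd).symm.le.trans (norm_coeff_le_supNorm g d)
  have hfilter : {d ∈ f.support | ‖coeff d f‖ = supNorm f}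
      = {d ∈ g.support | ‖coeff d g‖ = supNorm g} := by
    ext d
    simp only [mem_filter, mem_support_iff, hNg]
    constructor
    · rintro ⟨-, hd⟩
      exact ⟨norm_pos_iff.mp ((hiff d).mp hd ▸ hN), (hiff d).mp hd⟩
    · rintro ⟨-, hd⟩
      exact ⟨norm_pos_iff.mp ((hiff d).mpr hd ▸ hN), (hiff d).mpr hd⟩
  rw [gaussDegree, gaussDegree, hfilter]

end Ultrametric

end MonomialOrder

theorem MvPolynomial.supNorm_mul_pow_le_supNorm_X_mul_sub_C_mul {σ K : Type*} [NormedField K]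
    [IsUltrametricDist K] {q : ℕ} (φ : K →+* K) (hφ : ∀ c, ‖φ c‖ = ‖c‖ ^ q) (i : σ) (β : K)
    {g h : MvPolynomial σ K} (hg : g ≠ 0) (hh : h ≠ 0) :
    supNorm g * supNorm h ^ q ≤ supNorm (X i * g * map φ h - C β * map φ g * h) := by
  obtain ⟨m⟩ := MonomialOrder.nonempty σ
  have hP : supNorm (X i * g * map φ h) = supNorm g * supNorm h ^ q := by
    rw [supNorm_mul, supNorm_mul, X, supNorm_monomial, norm_one, one_mul, supNorm_map φ hφ]
  rw [← hP]
  by_contra! hlt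
  have hβ : β ≠ 0 := by
    rintro rfl
    simp at hlt
  have hCβ : (C β : MvPolynomial σ K) ≠ 0 := C_ne_zero.mpr hβ
  have hmap {f : MvPolynomial σ K} (hf : f ≠ 0) : map φ f ≠ 0 :=
    (map_ne_zero_iff _ (map_injective φ φ.injective)).mpr hf
  have hdeg := m.gaussDegree_eq_of_supNorm_sub_lt hlt
  rw [m.gaussDegree_mul (mul_ne_zero (X_ne_zero i) hg) (hmap hh),
    m.gaussDegree_mul (X_ne_zero i) hg, m.gaussDegree_mul (mul_ne_zero hCβ (hmap hg)) hh,
    m.gaussDegree_mul hCβ (hmap hg), X, C_apply, m.gaussDegree_monomial _ one_ne_zero,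
    m.gaussDegree_monomial _ hβ, m.gaussDegree_map φ hφ, m.gaussDegree_map φ hφ] at hdeg
  simp at hdeg

theorem norm_sub_map_div_self_lt_one {L : Type*} [NormedField L] [IsUltrametricDist L] {q : ℕ}
    {τ : L →+* L} (hτ : ∀ x, ‖τ x‖ = ‖x‖ ^ q) {a x y : L} (ha : ‖a‖ ≤ 1) (hx : τ x = a * x)
    (hxy : ‖x - y‖ < min ‖x‖ 1) : ‖a - τ y / y‖ < 1 := by
  have hq := ne_zero_of_norm_map_eq_pow hτ
  have hxy' : ‖x - y‖ < ‖x‖ := hxy.trans_le (min_le_left _ _)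
  have hy : ‖y‖ = ‖x‖ := norm_eq_of_norm_sub_lt hxy'
  have hy0 : y ≠ 0 := norm_pos_iff.mp (hy ▸ (norm_nonneg _).trans_lt hxy')
  have hnum : ‖a * y - τ y‖ < ‖y‖ := by
    have hsplit : a * y - τ y = τ (x - y) + a * (y - x) := by rw [map_sub, hx]; ring
    rw [hsplit, hy]
    refine (norm_add_le_max _ _).trans_lt (max_lt ?_ ?_)
    · rw [hτ]
      exact (pow_le_of_le_one (norm_nonneg _) (hxy.trans_le (min_le_right _ _)).le hq).trans_lt
        hxy'
    · rw [norm_mul, norm_sub_rev]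
      exact (mul_le_of_le_one_left (norm_nonneg _) ha).trans_lt hxy'
  rwa [show a - τ y / y = (a * y - τ y) / y by field_simp, norm_div,
    div_lt_one (norm_pos_iff.mpr hy0)]

theorem MvPolynomial.exists_ringHom_eq_pow {σ K L : Type*} [Field K] [Semiring L] [Nontrivial L]
    {ι : MvPolynomial σ K →+* L} {τ : L →+* L} {q : ℕ}
    (hτ : ∀ c, τ (ι (C c)) = ι (C (c ^ q))) : ∃ φ : K →+* K, ∀ c, φ c = c ^ q := by
  have hinj := (ι.comp C).injective
  have hzero : (0 : K) ^ q = 0 := hinj (by simpa using (hτ 0).symm)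
  have hadd (a b : K) : (a + b) ^ q = a ^ q + b ^ q := by
    refine hinj ?_
    simp only [RingHom.comp_apply, ← hτ, map_add]
  exact ⟨{ powMonoidHom q with map_zero' := hzero, map_add' := hadd }, fun _ => rfl⟩

section GaussNormEmbedding

variable {σ K L : Type*} [NormedField K] [NormedField L] {ι : MvPolynomial σ K →+* L}

theorem isUltrametricDist_of_norm_eq_supNorm [IsUltrametricDist L]
    (hι : ∀ f, ‖ι f‖ = supNorm f) : IsUltrametricDist K := by
  have hC (c : K) : ‖ι (C c)‖ = ‖c‖ := by rw [hι, C_apply, supNorm_monomial]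
  refine isUltrametricDist_of_forall_norm_add_le_max_norm fun c d => ?_
  simpa only [← map_add, hC] using norm_add_le_max (ι (C c)) (ι (C d))

theorem one_le_norm_X_sub_C_mul_map_div [IsUltrametricDist K] (hι : ∀ f, ‖ι f‖ = supNorm f)
    {τ : L →+* L} {φ : K →+* K} {q : ℕ} (hφ : ∀ c, ‖φ c‖ = ‖c‖ ^ q)
    (hτι : τ.comp ι = ι.comp (map φ)) (i : σ) (β : K) {g h : MvPolynomial σ K}
    (hg : ι g ≠ 0) (hh : ι h ≠ 0) :
    1 ≤ ‖ι (X i) - ι (C β) * τ (ι g / ι h) / (ι g / ι h)‖ := by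
  have hτ (f : MvPolynomial σ K) : τ (ι f) = ι (map φ f) := RingHom.congr_fun hτι f
  have hg0 : g ≠ 0 := by rintro rfl; simp at hg
  have hh0 : h ≠ 0 := by rintro rfl; simp at hh
  have hh' : ι (map φ h) ≠ 0 := by rw [← hτ]; exact (map_ne_zero τ).mpr hh
  have heq : ι (X i) - ι (C β) * τ (ι g / ι h) / (ι g / ι h)
      = ι (X i * g * map φ h - C β * map φ g * h) / (ι g * ι (map φ h)) := by
    rw [map_div₀, hτ, hτ, map_sub, map_mul, map_mul, map_mul, map_mul]
    field_simp
  have hpos : 0 < supNorm g * supNorm h ^ q := by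
    have := supNorm_pos hg0
    have := supNorm_pos hh0
    positivity
  rw [heq, norm_div, norm_mul, hι, hι, hι, supNorm_map φ hφ, one_le_div hpos]
  exact supNorm_mul_pow_le_supNorm_X_mul_sub_C_mul φ hφ i β hg0 hh0

end GaussNormEmbedding

theorem stmt17_general {s q : ℕ}
    {Cinf Cs : Type*} [NormedField Cinf] [NormedField Cs]
    [IsUltrametricDist Cs]
    (ι : MvPolynomial (Fin (s + 1)) Cinf →+* Cs)
    (hGauss : ∀ f : MvPolynomial (Fin (s + 1)) Cinf,
      ‖ι f‖ = ⨆ d : Fin (s + 1) →₀ ℕ, ‖MvPolynomial.coeff d f‖)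
    (hdense : DenseRange
      fun fg : MvPolynomial (Fin (s + 1)) Cinf × MvPolynomial (Fin (s + 1)) Cinf =>
        ι fg.1 / ι fg.2)
    (τ : Cs →+* Cs)
    (hτnorm : ∀ x : Cs, ‖τ x‖ = ‖x‖ ^ q)
    (hτX : ∀ i : Fin (s + 1), τ (ι (MvPolynomial.X i)) = ι (MvPolynomial.X i))
    (hτC : ∀ c : Cinf, τ (ι (MvPolynomial.C c)) = ι (MvPolynomial.C (c ^ q))) :
    (¬ ∃ x : Cs, x ≠ 0 ∧ τ x = ι (MvPolynomial.X 0) * x) ∧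
      ¬ ∃ (β : Cinf) (g h : MvPolynomial (Fin (s + 1)) Cinf),
          β ≠ 0 ∧
          (∀ d, ∃ j : ℕ, 0 < j ∧
            MvPolynomial.coeff d g ^ q ^ j = MvPolynomial.coeff d g) ∧
          (∀ d, ∃ j : ℕ, 0 < j ∧
            MvPolynomial.coeff d h ^ q ^ j = MvPolynomial.coeff d h) ∧
          ι g ≠ 0 ∧ ι h ≠ 0 ∧
          ‖ι (MvPolynomial.X 0) -
              ι (MvPolynomial.C β) * τ (ι g / ι h) / (ι g / ι h)‖ < 1 := by
  have hι : ∀ f, ‖ι f‖ = supNorm f := hGauss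
  have := isUltrametricDist_of_norm_eq_supNorm hι
  obtain ⟨φ, hφ⟩ := exists_ringHom_eq_pow hτC
  have hτι : τ.comp ι = ι.comp (map φ) :=
    ringHom_ext (fun c => by simp [hτC, hφ]) fun i => by simp [hτX]
  have key := one_le_norm_X_sub_C_mul_map_div hι (fun c => by rw [hφ, norm_pow]) hτι 0
  refine ⟨?_, fun ⟨β, g, h, _, _, _, hg, hh, hlt⟩ => (key β hg hh).not_gt hlt⟩
  rintro ⟨x, hx0, hx⟩
  obtain ⟨⟨g, h⟩, hgh⟩ := hdense.exists_dist_lt x (lt_min (norm_pos_iff.mpr hx0) one_pos)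
  dsimp only at hgh
  rw [dist_eq_norm] at hgh
  have hy0 : ι g / ι h ≠ 0 := by
    intro hy
    rw [hy, sub_zero] at hgh
    exact (hgh.trans_le (min_le_left _ _)).false
  obtain ⟨hg, hh⟩ := div_ne_zero_iff.mp hy0
  have hX : ‖ι (X 0)‖ ≤ 1 := by rw [hι, X, supNorm_monomial, norm_one]
  have hge := key 1 hg hh
  rw [C_1, map_one, one_mul] at hge
  exact hge.not_gt (norm_sub_map_div_self_lt_one hτnorm hX hx hgh)

/-- The element `t₁` does not belong to `U_s`.  Setting: `C_∞` is the completion of an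
algebraic closure of `𝔽_q((1/θ))` (abstractly: a complete, algebraically closed,
non-archimedean normed field), `C_{s,∞} = Cs` is the completion of `C_∞(t₁, …, t_s)`
(with `s ≥ 1` variables, indexed by `Fin (s+1)`) for the Gauss valuation, axiomatized by
the embedding `ι` with the Gauss-norm and density properties, and `τ` is induced by the
`q`-power map on `C_∞`, fixing the `tᵢ`.  Claims: there is no `x ∈ C_{s,∞}^×` with
`τ(x) = t₁·x`; equivalently, there are no `β ∈ C_∞^×` and
`γ = ι g / ι h ∈ \bar 𝔽_q(t₁,…,t_s)^×` with `v_∞(t₁ − β·τ(γ)/γ) > 0`, i.e. with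
`‖t₁ − β·τ(γ)/γ‖ < 1`. -/
theorem stmt17 {s q : ℕ} (hq : 1 < q)
    {Cinf Cs : Type*} [NormedField Cinf] [CompleteSpace Cinf] [NormedField Cs]
    [CompleteSpace Cs] [IsUltrametricDist Cs]
    (halg : IsAlgClosed Cinf)
    (ι : MvPolynomial (Fin (s + 1)) Cinf →+* Cs)
    (hGauss : ∀ f : MvPolynomial (Fin (s + 1)) Cinf,
      ‖ι f‖ = ⨆ d : Fin (s + 1) →₀ ℕ, ‖MvPolynomial.coeff d f‖)
    (hdense : DenseRange
      fun fg : MvPolynomial (Fin (s + 1)) Cinf × MvPolynomial (Fin (s + 1)) Cinf =>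
        ι fg.1 / ι fg.2)
    (τ : Cs →+* Cs) (hτcont : Continuous τ)
    (hτnorm : ∀ x : Cs, ‖τ x‖ = ‖x‖ ^ q)
    (hτX : ∀ i : Fin (s + 1), τ (ι (MvPolynomial.X i)) = ι (MvPolynomial.X i))
    (hτC : ∀ c : Cinf, τ (ι (MvPolynomial.C c)) = ι (MvPolynomial.C (c ^ q))) :
    (¬ ∃ x : Cs, x ≠ 0 ∧ τ x = ι (MvPolynomial.X 0) * x) ∧
      ¬ ∃ (β : Cinf) (g h : MvPolynomial (Fin (s + 1)) Cinf),
          β ≠ 0 ∧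
          (∀ d, ∃ j : ℕ, 0 < j ∧
            MvPolynomial.coeff d g ^ q ^ j = MvPolynomial.coeff d g) ∧
          (∀ d, ∃ j : ℕ, 0 < j ∧
            MvPolynomial.coeff d h ^ q ^ j = MvPolynomial.coeff d h) ∧
          ι g ≠ 0 ∧ ι h ≠ 0 ∧
          ‖ι (MvPolynomial.X 0) -
              ι (MvPolynomial.C β) * τ (ι g / ι h) / (ι g / ι h)‖ < 1 :=
  stmt17_general ι hGauss hdense τ hτnorm hτX hτC
end
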